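/- arXiv:1201.6477 — 2 statements merged into one kernel-verified Lean document; each statement's English description precedes it below -/
import Mathlib

section
/- For all real x with 0 < |x| < π/2, one has 2x/sin x + x/tan x < 3 + ((8π−24)/π³)·x³·sin x. -/
open Real Finset
open scoped Nat

/-! Since sin x > 0 and both sides are even, the claim is the positivity on (0, π/2) of
`g x = 3 sin x + κ x³ sin² x - 2x - x cos x`, where `κ = (8π - 24)/π³` is exactly the value with
`g (π/2) = 0`. On (0, 1.4] the alternating Taylor bounds `sin x ≥ T₇ x` and `cos x ≤ T₈ x` reduce
this to a polynomial inequality. On [1.4, π/2] `g` is strictly decreasing down to `g (π/2) = 0`: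
in the variable `t = π/2 - x ∈ (0, 0.171)` the crude bounds `sin t ≤ t`, `cos t ≤ 1` already make
`g'` negative. -/

noncomputable def sinTaylor (n : ℕ) (x : ℝ) : ℝ :=
  ∑ k ∈ range n, (-1) ^ k * x ^ (2 * k + 1) / (2 * k + 1)!

noncomputable def cosTaylor (n : ℕ) (x : ℝ) : ℝ :=
  ∑ k ∈ range n, (-1) ^ k * x ^ (2 * k) / (2 * k)!

theorem hasDerivAt_sinTaylor (n : ℕ) (x : ℝ) :
    HasDerivAt (sinTaylor n) (cosTaylor n x) x := by
  refine HasDerivAt.fun_sum fun k _ => ?_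
  refine (((hasDerivAt_pow (2 * k + 1) x).const_mul ((-1 : ℝ) ^ k)).div_const
    ((2 * k + 1)! : ℝ)).congr_deriv ?_
  rw [Nat.factorial_succ]; push_cast; field_simp

theorem hasDerivAt_cosTaylor_succ (n : ℕ) (x : ℝ) :
    HasDerivAt (cosTaylor (n + 1)) (-sinTaylor n x) x := by
  have e : cosTaylor (n + 1) = fun y =>
      ∑ k ∈ range n, (-1) ^ (k + 1) * y ^ (2 * k + 1 + 1) / ((2 * k + 1 + 1)! : ℝ) + 1 := by
    ext y; simp [cosTaylor, sum_range_succ', mul_add]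
  rw [e, sinTaylor, ← sum_neg_distrib]
  refine (HasDerivAt.fun_sum fun k _ => ?_).add_const 1
  refine (((hasDerivAt_pow (2 * k + 1 + 1) x).const_mul ((-1 : ℝ) ^ (k + 1))).div_const
    ((2 * k + 1 + 1)! : ℝ)).congr_deriv ?_
  rw [Nat.factorial_succ]; push_cast; field_simp; ring

theorem apply_zero_le_of_hasDerivAt_nonneg {f f' : ℝ → ℝ} (hf : ∀ y, HasDerivAt f (f' y) y)
    (hf' : ∀ y, 0 ≤ y → 0 ≤ f' y) {x : ℝ} (hx : 0 ≤ x) : f 0 ≤ f x :=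
  monotoneOn_of_hasDerivWithinAt_nonneg (convex_Ici 0)
    (fun y _ => (hf y).continuousAt.continuousWithinAt) (fun y _ => (hf y).hasDerivWithinAt)
    (fun y hy => hf' y (interior_subset hy)) Set.self_mem_Ici hx hx

theorem neg_one_pow_mul_sinTaylor_sub_sin_nonneg_of_cos {n : ℕ}
    (hcos : ∀ y, 0 ≤ y → 0 ≤ (-1) ^ n * (cosTaylor (n + 1) y - cos y)) {x : ℝ} (hx : 0 ≤ x) :
    0 ≤ (-1) ^ n * (sinTaylor (n + 1) x - sin x) := by
  simpa [sinTaylor] using apply_zero_le_of_hasDerivAt_nonneg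
    (fun y => ((hasDerivAt_sinTaylor (n + 1) y).sub (hasDerivAt_sin y)).const_mul ((-1) ^ n))
    hcos hx

theorem neg_one_pow_mul_cosTaylor_sub_cos_nonneg_of_sin {n : ℕ}
    (hsin : ∀ y, 0 ≤ y → 0 ≤ (-1) ^ n * (sinTaylor (n + 1) y - sin y)) {x : ℝ} (hx : 0 ≤ x) :
    0 ≤ (-1) ^ (n + 1) * (cosTaylor (n + 2) x - cos x) := by
  have h := apply_zero_le_of_hasDerivAt_nonneg
    (fun y => ((hasDerivAt_cosTaylor_succ (n + 1) y).sub (hasDerivAt_cos y)).const_mul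
      ((-1) ^ (n + 1))) (fun y hy => by have := hsin y hy; ring_nf at this ⊢; linarith) hx
  simpa [cosTaylor, sum_range_succ'] using h

theorem neg_one_pow_mul_taylor_sub_nonneg (n : ℕ) {x : ℝ} (hx : 0 ≤ x) :
    0 ≤ (-1) ^ n * (cosTaylor (n + 1) x - cos x) ∧
      0 ≤ (-1) ^ n * (sinTaylor (n + 1) x - sin x) := by
  induction n generalizing x with
  | zero => simp [cosTaylor, sinTaylor, cos_le_one, sin_le hx]
  | succ n ih =>
    have hcos : ∀ y, 0 ≤ y → 0 ≤ (-1) ^ (n + 1) * (cosTaylor (n + 2) y - cos y) :=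
      fun y hy => neg_one_pow_mul_cosTaylor_sub_cos_nonneg_of_sin (fun z hz => (ih hz).2) hy
    exact ⟨hcos x hx, neg_one_pow_mul_sinTaylor_sub_sin_nonneg_of_cos hcos hx⟩

theorem taylor7_le_sin {x : ℝ} (hx : 0 ≤ x) :
    x - x ^ 3 / 6 + x ^ 5 / 120 - x ^ 7 / 5040 ≤ sin x := by
  have h := (neg_one_pow_mul_taylor_sub_nonneg 3 hx).2
  simp only [sinTaylor, sum_range_succ, Nat.factorial] at h
  norm_num at h
  linarith

theorem cos_le_taylor8 {x : ℝ} (hx : 0 ≤ x) :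
    cos x ≤ 1 - x ^ 2 / 2 + x ^ 4 / 24 - x ^ 6 / 720 + x ^ 8 / 40320 := by
  have h := (neg_one_pow_mul_taylor_sub_nonneg 4 hx).1
  simp only [cosTaylor, sum_range_succ, Nat.factorial] at h
  norm_num at h
  linarith

local notation "κ" => (8 * π - 24) / π ^ 3

theorem kappa_bounds : 0.036532 < κ ∧ κ < 0.0365328 := by
  have hπ3 : 0 < π ^ 3 := by positivity
  have hlo : 3.141592 ^ 3 < π ^ 3 := pow_lt_pow_left₀ pi_gt_d6 (by norm_num) (by norm_num)
  have hhi : π ^ 3 < 3.141593 ^ 3 := pow_lt_pow_left₀ pi_lt_d6 pi_pos.le (by norm_num)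
  have := pi_gt_d6
  have := pi_lt_d6
  constructor
  · rw [lt_div_iff₀ hπ3]; norm_num at hlo hhi ⊢; linarith
  · rw [div_lt_iff₀ hπ3]; norm_num at hlo hhi ⊢; linarith

noncomputable def huygensGap (y : ℝ) : ℝ :=
  3 * sin y + κ * y ^ 3 * sin y ^ 2 - 2 * y - y * cos y

noncomputable def huygensGapDeriv (y : ℝ) : ℝ :=
  2 * cos y - 2 + y * sin y + κ * (3 * y ^ 2 * sin y ^ 2 + 2 * y ^ 3 * (sin y * cos y))

theorem huygensGap_pi_div_two : huygensGap (π / 2) = 0 := by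
  simp only [huygensGap, sin_pi_div_two, cos_pi_div_two]
  field_simp
  ring

theorem hasDerivAt_huygensGap (y : ℝ) : HasDerivAt huygensGap (huygensGapDeriv y) y := by
  have h := ((((hasDerivAt_sin y).const_mul 3).add (((hasDerivAt_pow 3 y).const_mul κ).mul
    ((hasDerivAt_sin y).pow 2))).sub ((hasDerivAt_id y).const_mul 2)).sub
    ((hasDerivAt_id y).mul (hasDerivAt_cos y))
  refine (h : HasDerivAt huygensGap _ y).congr_deriv ?_
  simp only [huygensGapDeriv, id_eq, Pi.pow_apply]
  push_cast
  ring

theorem huygensGapDeriv_neg {y : ℝ} (hy1 : 1.4 < y) (hy2 : y < π / 2) :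
    huygensGapDeriv y < 0 := by
  obtain ⟨t, rfl⟩ : ∃ t, y = π / 2 - t := ⟨π / 2 - y, by ring⟩
  have hπ := pi_lt_d6
  have ht0 : 0 < t := by linarith
  have hs0 : 0 ≤ sin t := sin_nonneg_of_nonneg_of_le_pi ht0.le (by linarith)
  have hc0 : 0 ≤ cos t := cos_nonneg_of_mem_Icc ⟨by linarith, by linarith⟩
  have hcs : cos t * sin t ≤ t := by nlinarith [sin_le ht0.le, cos_le_one t]
  have hc2 : cos t ^ 2 ≤ 1 := by nlinarith [cos_le_one t]
  have hw0 : 0 ≤ π / 2 - t := by linarith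
  have hw : π / 2 - t ≤ 1.5707965 - t := by linarith
  have hbracket : 3 * (π / 2 - t) ^ 2 * cos t ^ 2 + 2 * (π / 2 - t) ^ 3 * (cos t * sin t) ≤
      3 * (1.5707965 - t) ^ 2 + 2 * (1.5707965 - t) ^ 3 * t := by
    have hsq : (π / 2 - t) ^ 2 * cos t ^ 2 ≤ (1.5707965 - t) ^ 2 :=
      (mul_le_of_le_one_right (by positivity) hc2).trans (by gcongr)
    have hcube : (π / 2 - t) ^ 3 * (cos t * sin t) ≤ (1.5707965 - t) ^ 3 * t :=
      mul_le_mul (pow_le_pow_left₀ hw0 hw 3) hcs (by positivity) (pow_nonneg (hw0.trans hw) 3)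
    linarith
  have hpoly : 2 * t - 2 + (1.5707965 - t) +
      0.0365328 * (3 * (1.5707965 - t) ^ 2 + 2 * (1.5707965 - t) ^ 3 * t) < 0 := by
    have ht : t ≤ 0.171 := by linarith
    nlinarith [mul_nonneg ht0.le (sub_nonneg.2 ht), pow_nonneg ht0.le 3, pow_nonneg ht0.le 4,
      mul_nonneg (pow_nonneg ht0.le 3) (sub_nonneg.2 ht)]
  have hwc : (π / 2 - t) * cos t ≤ 1.5707965 - t :=
    (mul_le_of_le_one_right hw0 (cos_le_one t)).trans hw
  have hκ := mul_le_mul kappa_bounds.2.le hbracket (by positivity) (by norm_num)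
  rw [huygensGapDeriv, sin_pi_div_two_sub, cos_pi_div_two_sub]
  linarith [sin_le ht0.le]

theorem strictAntiOn_huygensGap : StrictAntiOn huygensGap (Set.Icc 1.4 (π / 2)) :=
  strictAntiOn_of_hasDerivWithinAt_neg (convex_Icc _ _)
    (fun y _ => (hasDerivAt_huygensGap y).continuousAt.continuousWithinAt)
    (fun y _ => (hasDerivAt_huygensGap y).hasDerivWithinAt)
    (fun y hy => by rw [interior_Icc] at hy; exact huygensGapDeriv_neg hy.1 hy.2)

theorem huygensGap_pos_of_le {x : ℝ} (hx0 : 0 < x) (hx : x ≤ 1.4) : 0 < huygensGap x := by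
  have hu : x ^ 2 ≤ 1.96 := by nlinarith
  have hq : 1 / 60 - x ^ 2 / 1260 + (x ^ 2) ^ 2 / 40320 < 0.036532 * (1 - x ^ 2 / 6) ^ 2 := by
    nlinarith
  have hsin : x * (1 - x ^ 2 / 6) ≤ sin x := by linarith [sin_ge_sub_cube hx0.le]
  have hsq : (x * (1 - x ^ 2 / 6)) ^ 2 ≤ sin x ^ 2 :=
    pow_le_pow_left₀ (mul_nonneg hx0.le (by linarith)) hsin 2
  have hκ : 0.036532 * (x ^ 3 * (x * (1 - x ^ 2 / 6)) ^ 2) ≤ κ * (x ^ 3 * sin x ^ 2) :=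
    mul_le_mul kappa_bounds.1.le (by gcongr) (by positivity) (by linarith [kappa_bounds.1])
  have hkey := mul_lt_mul_of_pos_left hq (pow_pos hx0 5)
  have hcos := mul_le_mul_of_nonneg_left (cos_le_taylor8 hx0.le) hx0.le
  rw [huygensGap]
  linarith [taylor7_le_sin hx0.le]

theorem huygensGap_pos {x : ℝ} (hx0 : 0 < x) (hx : x < π / 2) : 0 < huygensGap x := by
  rcases le_or_gt x 1.4 with hx1 | hx1
  · exact huygensGap_pos_of_le hx0 hx1
  · have h14 : (1.4 : ℝ) ≤ π / 2 := by linarith [pi_gt_three]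
    rw [← huygensGap_pi_div_two]
    exact strictAntiOn_huygensGap ⟨hx1.le, hx.le⟩ ⟨h14, le_rfl⟩ hx

theorem huygens_upper_of_pos {x : ℝ} (hx0 : 0 < x) (hx : x < π / 2) :
    2 * x / sin x + x / tan x < 3 + κ * x ^ 3 * sin x := by
  have hs : 0 < sin x := sin_pos_of_pos_of_lt_pi hx0 (by linarith [pi_pos])
  have h := huygensGap_pos hx0 hx
  rw [huygensGap] at h
  rw [tan_eq_sin_div_cos, div_div_eq_mul_div, ← add_div, div_lt_iff₀ hs]
  linarith

theorem huygens_upper (x : ℝ) (h1 : 0 < |x|) (h2 : |x| < π / 2) :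
    2 * x / Real.sin x + x / Real.tan x < 3 + ((8 * π - 24) / π ^ 3) * x ^ 3 * Real.sin x := by
  have h := huygens_upper_of_pos h1 h2
  rcases abs_choice x with hx | hx <;> rw [hx] at h
  · exact h
  · rw [sin_neg, tan_neg, mul_neg, neg_div_neg_eq, neg_div_neg_eq] at h
    linarith [show κ * (-x) ^ 3 * -sin x = κ * x ^ 3 * sin x by ring]
end

section
/- For all real x with 0 < |x| < π/2, one has 2 + (17/720)·x³·sin x < x/sin x + ((x/2)/tan(x/2))². -/
/-!
Write `t = x / 2`, `s = sin t`, `c = cos t`. Since `sin x = 2 s c` and `tan t = s / c`,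
multiplying by `s ^ 2 c` and eliminating `c ^ 2` with `s ^ 2 + c ^ 2 = 1` turns the inequality
into the positivity of the polynomial `wilkerGap t c s`. It decreases in `c` (as
`(t ^ 2 + 2) s ^ 2 ≥ t ^ 2` once `s ≥ t - t ^ 3 / 6`) and in `s` on `[t - t ^ 3 / 6, t]`, so it
suffices to evaluate it at the Taylor bounds `c ≤ 1 - t ^ 2 / 2 + t ^ 4 / 24` and
`s ≤ t - t ^ 3 / 6 + t ^ 5 / 120`. There it is `t ^ 8` times a polynomial in `t ^ 2` that is
positive for `t ≤ 1`. The inequality is even in `x`.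
-/

open Real

theorem nonneg_of_deriv_nonneg {f : ℝ → ℝ} (hf : Differentiable ℝ f) (h0 : f 0 = 0)
    (hf' : ∀ x, 0 ≤ x → 0 ≤ deriv f x) {x : ℝ} (hx : 0 ≤ x) : 0 ≤ f x := by
  have hmono : MonotoneOn f (Set.Ici 0) :=
    monotoneOn_of_deriv_nonneg (convex_Ici 0) hf.continuous.continuousOn hf.differentiableOn
      (by simpa using fun y hy => hf' y hy.le)
  simpa [h0] using hmono Set.self_mem_Ici hx hx

theorem cos_le_quartic {x : ℝ} (hx : 0 ≤ x) : cos x ≤ 1 - x ^ 2 / 2 + x ^ 4 / 24 := by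
  have := nonneg_of_deriv_nonneg (f := fun t => 1 - t ^ 2 / 2 + t ^ 4 / 24 - cos t)
    (by fun_prop) (by simp) (fun t ht => by
      simp (disch := fun_prop) only [deriv_fun_sub, deriv_fun_add, deriv_const', deriv_div_const,
        deriv_fun_pow, Nat.cast_ofNat, Nat.add_one_sub_one, pow_one, deriv_id'', mul_one,
        zero_sub, deriv_cos', sub_neg_eq_add]
      linarith [sin_ge_sub_cube ht]) hx
  linarith

theorem sin_le_quintic {x : ℝ} (hx : 0 ≤ x) : sin x ≤ x - x ^ 3 / 6 + x ^ 5 / 120 := by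
  have := nonneg_of_deriv_nonneg (f := fun t => t - t ^ 3 / 6 + t ^ 5 / 120 - sin t)
    (by fun_prop) (by simp) (fun t ht => by
      simp (disch := fun_prop) only [deriv_fun_sub, deriv_fun_add, deriv_id'', deriv_div_const,
        deriv_fun_pow, Nat.cast_ofNat, Nat.add_one_sub_one, mul_one, Real.deriv_sin]
      linarith [cos_le_quartic ht]) hx
  linarith

noncomputable def wilkerGap (t c s : ℝ) : ℝ :=
  t * s - c * ((t ^ 2 + 2) * s ^ 2 - t ^ 2) - 17 / 45 * t ^ 3 * (s ^ 3 - s ^ 5)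

section
variable {t c c' s : ℝ}

theorem wilkerGap_eq_of_sq_add_sq (h : s ^ 2 + c ^ 2 = 1) :
    wilkerGap t c s = t * s + t ^ 2 * c ^ 3 - 2 * s ^ 2 * c - 17 / 45 * t ^ 3 * s ^ 3 * c ^ 2 := by
  unfold wilkerGap
  linear_combination (17 / 45 * t ^ 3 * s ^ 3 - t ^ 2 * c) * h

theorem wilkerGap_taylor_pos (ht0 : 0 < t) (ht1 : t ≤ 1) :
    0 < wilkerGap t (1 - t ^ 2 / 2 + t ^ 4 / 24) (t - t ^ 3 / 6 + t ^ 5 / 120) := by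
  set u := t ^ 2 with hu
  have hu0 : 0 ≤ u := sq_nonneg t
  have hu1 : u ≤ 1 := by nlinarith
  have hQ : 0 < 47 / 120 - 2329 / 7200 * u + 23827 / 194400 * u ^ 2 - 219127 / 7776000 * u ^ 3
      + 203117 / 46656000 * u ^ 4 - 329953 / 699840000 * u ^ 5 + 2533 / 69984000 * u ^ 6
      - 17 / 8748000 * u ^ 7 + 391 / 5598720000 * u ^ 8 - 17 / 11197440000 * u ^ 9
      + 17 / 1119744000000 * u ^ 10 := by
    -- for `u ≤ 1` the negative coefficients add up to less than `47 / 120`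
    have := fun n : ℕ => pow_le_one₀ (n := n) hu0 hu1
    linarith [this 3, this 5, this 7, this 9, pow_nonneg hu0 2, pow_nonneg hu0 4,
      pow_nonneg hu0 6, pow_nonneg hu0 8, pow_nonneg hu0 10]
  have h : wilkerGap t (1 - t ^ 2 / 2 + t ^ 4 / 24) (t - t ^ 3 / 6 + t ^ 5 / 120) =
      u ^ 4 * (47 / 120 - 2329 / 7200 * u + 23827 / 194400 * u ^ 2 - 219127 / 7776000 * u ^ 3
      + 203117 / 46656000 * u ^ 4 - 329953 / 699840000 * u ^ 5 + 2533 / 69984000 * u ^ 6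
      - 17 / 8748000 * u ^ 7 + 391 / 5598720000 * u ^ 8 - 17 / 11197440000 * u ^ 9
      + 17 / 1119744000000 * u ^ 10) := by
    rw [hu]; unfold wilkerGap; ring
  rw [h]
  exact mul_pos (by positivity) hQ

theorem sq_le_mul_sq_of_sub_cube_le (ht0 : 0 ≤ t) (ht1 : t ≤ 1) (hs : t - t ^ 3 / 6 ≤ s) :
    t ^ 2 ≤ (t ^ 2 + 2) * s ^ 2 := by
  have ht2 : t ^ 2 ≤ 1 := by nlinarith
  have h0 : 0 ≤ t - t ^ 3 / 6 := by nlinarith [mul_nonneg ht0 (sub_nonneg.2 ht2)]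
  have h1 : (t - t ^ 3 / 6) ^ 2 ≤ s ^ 2 := pow_le_pow_left₀ h0 hs 2
  nlinarith [mul_nonneg (sq_nonneg t) (sub_nonneg.2 ht2),
    mul_nonneg (pow_nonneg ht0 4) (sub_nonneg.2 ht2)]

theorem wilkerGap_le_of_le_left (hc : c ≤ c') (hs : t ^ 2 ≤ (t ^ 2 + 2) * s ^ 2) :
    wilkerGap t c' s ≤ wilkerGap t c s := by
  unfold wilkerGap
  nlinarith [mul_le_mul_of_nonneg_right hc (sub_nonneg.2 hs)]

theorem wilkerGap_antitoneOn (ht0 : 0 < t) (ht1 : t ≤ 4 / 5) (hc : 1 - t ^ 2 / 2 ≤ c) :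
    AntitoneOn (wilkerGap t c) (Set.Icc (t - t ^ 3 / 6) t) := by
  rintro s ⟨hs0, hs1⟩ s' ⟨hs'0, hs'1⟩ hss'
  have ht2 : t ^ 2 ≤ 16 / 25 := by nlinarith
  have hlow : 0 ≤ t - t ^ 3 / 6 := by nlinarith
  have hs : 0 ≤ s := hlow.trans hs0
  have hs' : 0 ≤ s' := hlow.trans hs'0
  have hlin : (2 - t ^ 4 / 2) * (2 * t - t ^ 3 / 3) ≤ c * (t ^ 2 + 2) * (s + s') :=
    mul_le_mul (by nlinarith) (by linarith) (by nlinarith) (by nlinarith)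
  have hquad : 0 ≤ s ^ 2 + s * s' + s' ^ 2 := by positivity
  have hquart : s ^ 4 + s ^ 3 * s' + s ^ 2 * s' ^ 2 + s * s' ^ 3 + s' ^ 4 ≤ 5 * t ^ 4 := by
    have : s ^ 4 ≤ t ^ 4 := by gcongr
    have : s ^ 3 * s' ≤ t ^ 3 * t := by gcongr
    have : s ^ 2 * s' ^ 2 ≤ t ^ 2 * t ^ 2 := by gcongr
    have : s * s' ^ 3 ≤ t * t ^ 3 := by gcongr
    have : s' ^ 4 ≤ t ^ 4 := by gcongr
    linarith
  have hpoly : 0 ≤ -t + (2 - t ^ 4 / 2) * (2 * t - t ^ 3 / 3) - 17 / 9 * t ^ 7 := by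
    nlinarith [mul_nonneg ht0.le (sub_nonneg.2 ht2), pow_pos ht0 3, pow_pos ht0 5, pow_pos ht0 7]
  have hslope : 0 ≤ -t + c * (t ^ 2 + 2) * (s + s')
      + 17 / 45 * t ^ 3 * (s ^ 2 + s * s' + s' ^ 2)
      - 17 / 45 * t ^ 3 * (s ^ 4 + s ^ 3 * s' + s ^ 2 * s' ^ 2 + s * s' ^ 3 + s' ^ 4) := by
    nlinarith [pow_pos ht0 3]
  have hfactor : wilkerGap t c s - wilkerGap t c s' =
      (s' - s) * (-t + c * (t ^ 2 + 2) * (s + s')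
      + 17 / 45 * t ^ 3 * (s ^ 2 + s * s' + s' ^ 2)
      - 17 / 45 * t ^ 3 * (s ^ 4 + s ^ 3 * s' + s ^ 2 * s' ^ 2 + s * s' ^ 3 + s' ^ 4)) := by
    unfold wilkerGap; ring
  nlinarith [mul_nonneg (sub_nonneg.2 hss') hslope]

theorem wilkerGap_cos_sin_pos (ht0 : 0 < t) (ht1 : t ≤ 4 / 5) :
    0 < wilkerGap t (cos t) (sin t) := by
  have hsin_mem : sin t ∈ Set.Icc (t - t ^ 3 / 6) t := ⟨sin_ge_sub_cube ht0.le, sin_le ht0.le⟩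
  have htaylor_mem : t - t ^ 3 / 6 + t ^ 5 / 120 ∈ Set.Icc (t - t ^ 3 / 6) t := by
    have : t ^ 5 ≤ t ^ 3 := pow_le_pow_of_le_one ht0.le (by linarith) (by norm_num)
    constructor <;> nlinarith [pow_pos ht0 5]
  calc 0 < wilkerGap t (1 - t ^ 2 / 2 + t ^ 4 / 24) (t - t ^ 3 / 6 + t ^ 5 / 120) :=
        wilkerGap_taylor_pos ht0 (by linarith)
    _ ≤ wilkerGap t (1 - t ^ 2 / 2 + t ^ 4 / 24) (sin t) :=
        wilkerGap_antitoneOn ht0 ht1 (by nlinarith [pow_pos ht0 4]) hsin_mem htaylor_mem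
          (sin_le_quintic ht0.le)
    _ ≤ wilkerGap t (cos t) (sin t) :=
        wilkerGap_le_of_le_left (cos_le_quartic ht0.le)
          (sq_le_mul_sq_of_sub_cube_le ht0.le (by linarith) (sin_ge_sub_cube ht0.le))

end

theorem wilker_lower_of_pos {x : ℝ} (hx0 : 0 < x) (hx : x < π / 2) :
    2 + (17 / 720) * x ^ 3 * Real.sin x <
      x / Real.sin x + ((x / 2) / Real.tan (x / 2)) ^ 2 := by
  obtain ⟨t, rfl⟩ : ∃ t, x = 2 * t := ⟨x / 2, by ring⟩
  have ht1 : t ≤ 4 / 5 := by linarith [pi_lt_d2]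
  have hs : 0 < sin t := sin_pos_of_pos_of_lt_pi (by linarith) (by linarith [pi_pos])
  have hc : 0 < cos t := cos_pos_of_mem_Ioo ⟨by linarith, by linarith⟩
  have hgap := div_pos (wilkerGap_cos_sin_pos (by linarith) ht1)
    (by positivity : 0 < sin t ^ 2 * cos t)
  rw [wilkerGap_eq_of_sq_add_sq (sin_sq_add_cos_sq t)] at hgap
  rw [mul_div_cancel_left₀ t two_ne_zero, sin_two_mul, tan_eq_sin_div_cos]
  refine sub_pos.1 (hgap.trans_eq ?_)
  field_simp
  ring

theorem wilker_lower (x : ℝ) (h1 : 0 < |x|) (h2 : |x| < π / 2) :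
    2 + (17 / 720) * x ^ 3 * Real.sin x <
      x / Real.sin x + ((x / 2) / Real.tan (x / 2)) ^ 2 := by
  rcases (abs_pos.1 h1).lt_or_gt with hx | hx
  · have := wilker_lower_of_pos (neg_pos.2 hx) (by rwa [abs_of_neg hx] at h2)
    rw [sin_neg, neg_div_neg_eq, neg_div 2 x, tan_neg, neg_div_neg_eq] at this
    convert this using 2
    ring
  · exact wilker_lower_of_pos hx (by rwa [abs_of_pos hx] at h2)
end
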